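/- Let n be a natural number, b > 0, and let c : (Fin n → ℝ) → ℝ be a bounded function. Then for all adjacent streams σ, σ' (i.e. d(σ, σ') = 1), |SS_{σ,b}(c) − SS_{σ',b}(c)| ≤ (exp(b) − 1) · SS_{σ',b}(c). In particular, the local sensitivity of the function σ ↦ SS_{σ,b}(c) at σ' is at most (exp(b) − 1) · SS_{σ',b}(c). -/

import Mathlib

/-!
Moving from `σ` to an adjacent stream `σ'` changes every Hamming distance `d(σ, τ)` by at most
one, so every term of the supremum defining the smooth sensitivity changes by a factor of at most
`exp b`. Hence `exp (-b) · SS_{σ'} ≤ SS_σ ≤ exp b · SS_{σ'}`, and `1 - exp (-b) ≤ exp b - 1`.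
-/

/-- Local sensitivity of `c` at `σ`: the supremum of `|c σ - c σ'|` over streams `σ'`
adjacent to `σ` (Hamming distance 1). -/
noncomputable def localSens {n : ℕ} (c : (Fin n → ℝ) → ℝ) (σ : Fin n → ℝ) : ℝ :=
  sSup {x : ℝ | ∃ σ' : Fin n → ℝ, hammingDist σ σ' = 1 ∧ x = |c σ - c σ'|}

/-- `b`-smooth sensitivity of `c` at `σ`: the supremum of
`LS_{σ'}(c) · exp(-b · d(σ, σ'))` over all streams `σ'`. -/
noncomputable def smoothSens {n : ℕ} (b : ℝ) (c : (Fin n → ℝ) → ℝ) (σ : Fin n → ℝ) : ℝ :=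
  sSup {x : ℝ | ∃ σ' : Fin n → ℝ, x = localSens c σ' * Real.exp (-(b * hammingDist σ σ'))}

lemma abs_sub_le_sub_one_mul_of_le_mul {x y K : ℝ} (hK : 1 ≤ K)
    (hxy : x ≤ K * y) (hyx : y ≤ K * x) : |x - y| ≤ (K - 1) * y := by
  rw [abs_sub_le_iff]
  refine ⟨by linarith, ?_⟩
  nlinarith [sq_nonneg (K - 1)]

section Sensitivity

variable {n : ℕ} {b : ℝ} {c : (Fin n → ℝ) → ℝ}

lemma localSens_nonneg (c : (Fin n → ℝ) → ℝ) (σ : Fin n → ℝ) : 0 ≤ localSens c σ :=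
  Real.sSup_nonneg <| by rintro _ ⟨_, -, rfl⟩; exact abs_nonneg _

lemma localSens_le_two_mul {M : ℝ} (hM : ∀ σ, |c σ| ≤ M) (σ : Fin n → ℝ) :
    localSens c σ ≤ 2 * M := by
  refine Real.sSup_le ?_ (by linarith [(abs_nonneg (c σ)).trans (hM σ)])
  rintro _ ⟨τ, -, rfl⟩
  linarith [abs_sub (c σ) (c τ), hM σ, hM τ]

lemma smoothSens_nonneg (b : ℝ) (c : (Fin n → ℝ) → ℝ) (σ : Fin n → ℝ) :
    0 ≤ smoothSens b c σ :=
  Real.sSup_nonneg <| by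
    rintro _ ⟨τ, rfl⟩; exact mul_nonneg (localSens_nonneg c τ) (Real.exp_pos _).le

lemma le_smoothSens (hb : 0 ≤ b) (hc : BddAbove (Set.range (localSens c)))
    (σ τ : Fin n → ℝ) :
    localSens c τ * Real.exp (-(b * hammingDist σ τ)) ≤ smoothSens b c σ := by
  obtain ⟨L, hL⟩ := hc
  refine le_csSup ⟨L, ?_⟩ ⟨τ, rfl⟩
  rintro _ ⟨τ', rfl⟩
  have hexp : Real.exp (-(b * hammingDist σ τ')) ≤ 1 :=
    Real.exp_le_one_iff.mpr (neg_nonpos.mpr (by positivity))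
  calc localSens c τ' * Real.exp (-(b * hammingDist σ τ'))
      ≤ localSens c τ' := mul_le_of_le_one_right (localSens_nonneg c τ') hexp
    _ ≤ L := hL ⟨τ', rfl⟩

lemma smoothSens_le_exp_mul (hb : 0 ≤ b) (hc : BddAbove (Set.range (localSens c)))
    (σ σ' : Fin n → ℝ) :
    smoothSens b c σ ≤ Real.exp (b * hammingDist σ σ') * smoothSens b c σ' := by
  refine Real.sSup_le ?_ (mul_nonneg (Real.exp_pos _).le (smoothSens_nonneg b c σ'))
  rintro _ ⟨τ, rfl⟩
  have htri : (hammingDist σ' τ : ℝ) ≤ hammingDist σ σ' + hammingDist σ τ := by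
    exact_mod_cast hammingDist_comm σ σ' ▸ hammingDist_triangle σ' σ τ
  have hexp : Real.exp (-(b * hammingDist σ τ)) ≤
      Real.exp (b * hammingDist σ σ') * Real.exp (-(b * hammingDist σ' τ)) := by
    rw [← Real.exp_add, Real.exp_le_exp]
    nlinarith
  calc localSens c τ * Real.exp (-(b * hammingDist σ τ))
      ≤ localSens c τ * (Real.exp (b * hammingDist σ σ') *
          Real.exp (-(b * hammingDist σ' τ))) :=
        mul_le_mul_of_nonneg_left hexp (localSens_nonneg c τ)
    _ = Real.exp (b * hammingDist σ σ') *
          (localSens c τ * Real.exp (-(b * hammingDist σ' τ))) := by ring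
    _ ≤ Real.exp (b * hammingDist σ σ') * smoothSens b c σ' :=
        mul_le_mul_of_nonneg_left (le_smoothSens hb hc σ' τ) (Real.exp_pos _).le

lemma abs_smoothSens_sub_le (hb : 0 ≤ b) (hc : BddAbove (Set.range (localSens c)))
    {σ σ' : Fin n → ℝ} (hadj : hammingDist σ σ' = 1) :
    |smoothSens b c σ - smoothSens b c σ'| ≤ (Real.exp b - 1) * smoothSens b c σ' := by
  have hexp := smoothSens_le_exp_mul hb hc
  refine abs_sub_le_sub_one_mul_of_le_mul (Real.one_le_exp hb) ?_ ?_
  · simpa [hadj] using hexp σ σ'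
  · simpa [hammingDist_comm σ' σ, hadj] using hexp σ' σ

lemma localSens_smoothSens_le (hb : 0 ≤ b) (hc : BddAbove (Set.range (localSens c)))
    (σ : Fin n → ℝ) :
    localSens (smoothSens b c) σ ≤ (Real.exp b - 1) * smoothSens b c σ := by
  refine Real.sSup_le ?_
    (mul_nonneg (sub_nonneg.mpr (Real.one_le_exp hb)) (smoothSens_nonneg b c σ))
  rintro _ ⟨τ, hτ, rfl⟩
  rw [abs_sub_comm]
  exact abs_smoothSens_sub_le hb hc (hammingDist_comm σ τ ▸ hτ)

end Sensitivity

/-- For adjacent streams `σ, σ'`, `|SS_{σ,b}(c) − SS_{σ',b}(c)| ≤ (exp(b) − 1) · SS_{σ',b}(c)`;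
in particular the local sensitivity of `σ ↦ SS_{σ,b}(c)` at `σ'` is at most
`(exp(b) − 1) · SS_{σ',b}(c)`. -/
theorem smoothSens_lipschitz {n : ℕ} (b : ℝ) (hb : 0 < b)
    (c : (Fin n → ℝ) → ℝ) (M : ℝ) (hM : ∀ σ : Fin n → ℝ, |c σ| ≤ M)
    (σ σ' : Fin n → ℝ) (hadj : hammingDist σ σ' = 1) :
    |smoothSens b c σ - smoothSens b c σ'| ≤ (Real.exp b - 1) * smoothSens b c σ' ∧
    localSens (fun τ => smoothSens b c τ) σ' ≤ (Real.exp b - 1) * smoothSens b c σ' := by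
  have hc : BddAbove (Set.range (localSens c)) :=
    ⟨2 * M, by rintro _ ⟨τ, rfl⟩; exact localSens_le_two_mul hM τ⟩
  exact ⟨abs_smoothSens_sub_le hb.le hc hadj, localSens_smoothSens_le hb.le hc σ'⟩
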